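/- Let η(x) be a probability vector over {1,…,c} with unique maximizer y = η*(x), second best s(x), and let Ȳ ⊂ {1,…,c}\{y} with ∑_{j∈Ȳ} η^j(x) < 1. Let a = argmax_{j∈Ȳ} η^j(x) and b = argmax_{j∉{y}∪Ȳ} η^j(x), and suppose every k ∉ {y} ∪ Ȳ satisfies η^k(x) < η^a(x) (so s(x) = a). Then the second-best label of the reduced posterior η' (excluding Ȳ) is b, and η'^y(x) − η'^b(x) = (η^y(x) − η^b(x))/(1 − ∑_{j∈Ȳ} η^j(x)) ≥ η^y(x) − η^a(x); i.e., the reduced margin is at least the original margin. -/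

import Mathlib

/-!
Dividing by `1 - ∑_{Ybar} η ∈ (0, 1]` rescales every surviving label by the same factor `≥ 1`,
so the order among the labels outside `Ybar` is kept and every nonnegative gap can only grow.
Since the runner-up `a` was removed, the new runner-up is `b`, and
`η y - η a ≤ η y - η b ≤ (η y - η b) / (1 - ∑_{Ybar} η)`.
-/

open Finset

section ReducedPosterior

variable {ι : Type*} [DecidableEq ι] (η : ι → ℝ) (Ybar : Finset ι)

/-- The paper's `η'`. -/
noncomputable def reducedPosterior (j : ι) : ℝ :=
  if j ∉ Ybar then η j / (1 - ∑ k ∈ Ybar, η k) else 0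

variable {η Ybar}

lemma reducedPosterior_of_notMem {j : ι} (hj : j ∉ Ybar) :
    reducedPosterior η Ybar j = η j / (1 - ∑ k ∈ Ybar, η k) := by
  simp [reducedPosterior, hj]

lemma reducedPosterior_of_mem {j : ι} (hj : j ∈ Ybar) : reducedPosterior η Ybar j = 0 := by
  simp [reducedPosterior, hj]

lemma reducedPosterior_sub {i j : ι} (hi : i ∉ Ybar) (hj : j ∉ Ybar) :
    reducedPosterior η Ybar i - reducedPosterior η Ybar j =
      (η i - η j) / (1 - ∑ k ∈ Ybar, η k) := by
  rw [reducedPosterior_of_notMem hi, reducedPosterior_of_notMem hj, sub_div]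

lemma reducedPosterior_le_of_forall_le (hD : 0 ≤ 1 - ∑ k ∈ Ybar, η k) {y b : ι}
    (hb : 0 ≤ η b) (hbY : b ∉ Ybar) (hbmax : ∀ j, j ≠ y → j ∉ Ybar → η j ≤ η b)
    {j : ι} (hj : j ≠ y) : reducedPosterior η Ybar j ≤ reducedPosterior η Ybar b := by
  rw [reducedPosterior_of_notMem hbY]
  by_cases hjY : j ∈ Ybar
  · rw [reducedPosterior_of_mem hjY]
    exact div_nonneg hb hD
  · rw [reducedPosterior_of_notMem hjY]
    exact div_le_div_of_nonneg_right (hbmax j hj hjY) hD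

end ReducedPosterior

theorem stmt15_general {c : ℕ} (η : Fin c → ℝ) (y : Fin c) (Ybar : Finset (Fin c))
    (a b : Fin c)
    (hnn : ∀ j, 0 ≤ η j)
    (hy : ∀ j, j ≠ y → η j < η y) (hyY : y ∉ Ybar)
    (hlt : ∑ j ∈ Ybar, η j < 1)
    (hby : b ≠ y) (hbY : b ∉ Ybar)
    (hbmax : ∀ j, j ≠ y → j ∉ Ybar → η j ≤ η b)
    (hsa : ∀ k, k ≠ y → k ∉ Ybar → η k < η a)
    (η' : Fin c → ℝ)
    (hdef : ∀ j, η' j = if j ∉ Ybar then η j / (1 - ∑ k ∈ Ybar, η k) else 0) :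
    (∀ j, j ≠ y → η' j ≤ η' b) ∧
      η' y - η' b = (η y - η b) / (1 - ∑ j ∈ Ybar, η j) ∧
      η y - η a ≤ η' y - η' b := by
  obtain rfl : η' = reducedPosterior η Ybar := funext hdef
  have hD : 0 < 1 - ∑ k ∈ Ybar, η k := sub_pos.mpr hlt
  have hD1 : 1 - ∑ k ∈ Ybar, η k ≤ 1 := sub_le_self _ (sum_nonneg fun j _ => hnn j)
  have hmargin := reducedPosterior_sub (η := η) hyY hbY
  refine ⟨fun j hj => reducedPosterior_le_of_forall_le hD.le (hnn b) hbY hbmax hj, hmargin, ?_⟩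
  calc η y - η a ≤ η y - η b := by linarith [hsa b hby hbY]
    _ ≤ (η y - η b) / (1 - ∑ k ∈ Ybar, η k) :=
        le_div_self (sub_nonneg.mpr (hy b hby).le) hD hD1
    _ = reducedPosterior η Ybar y - reducedPosterior η Ybar b := hmargin.symm

/-- Removing the disturbing labels `Ybar` replaces the runner-up `a` by the weaker `b`
while inflating all remaining gaps: the second-best label of the reduced posterior is
`b`, the reduced top margin equals `(η y - η b)/(1 - ∑_{Ybar} η)`, and it is at least
the original margin `η y - η a`. -/
theorem stmt15 {c : ℕ} (η : Fin c → ℝ) (y : Fin c) (Ybar : Finset (Fin c))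
    (a b : Fin c)
    (hnn : ∀ j, 0 ≤ η j) (hsum : ∑ j, η j = 1)
    (hy : ∀ j, j ≠ y → η j < η y) (hyY : y ∉ Ybar)
    (hlt : ∑ j ∈ Ybar, η j < 1)
    (ha : a ∈ Ybar) (hamax : ∀ j ∈ Ybar, η j ≤ η a)
    (hby : b ≠ y) (hbY : b ∉ Ybar)
    (hbmax : ∀ j, j ≠ y → j ∉ Ybar → η j ≤ η b)
    (hsa : ∀ k, k ≠ y → k ∉ Ybar → η k < η a)
    (η' : Fin c → ℝ)
    (hdef : ∀ j, η' j = if j ∉ Ybar then η j / (1 - ∑ k ∈ Ybar, η k) else 0) :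
    (∀ j, j ≠ y → η' j ≤ η' b) ∧
      η' y - η' b = (η y - η b) / (1 - ∑ j ∈ Ybar, η j) ∧
      η y - η a ≤ η' y - η' b :=
  stmt15_general η y Ybar a b hnn hy hyY hlt hby hbY hbmax hsa η' hdef
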